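/- Let P ⊂ ℝ³ be compact and S ⊂ ℝ³ compact with dist(S,P) ≥ δ > 0, μ a finite measure on S, and j ∈ L²(S, ℝ³; μ). Then for each k ∈ ℕ, the function y ↦ ∫_S K(x,y) × j(x) dμ(x) is C^k on the interior of P, and the map j ↦ BS(j) is a bounded linear operator from L²(S,ℝ³;μ) to L²(P,ℝ³); moreover this operator is compact. -/

import Mathlib

open MeasureTheory

/-- The cross product on ℝ³ (as `EuclideanSpace ℝ (Fin 3)`). -/
noncomputable def cross3 (a b : EuclideanSpace ℝ (Fin 3)) : EuclideanSpace ℝ (Fin 3) :=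
  (WithLp.equiv 2 (Fin 3 → ℝ)).symm
    ![a 1 * b 2 - a 2 * b 1, a 2 * b 0 - a 0 * b 2, a 0 * b 1 - a 1 * b 0]

/-- The Biot–Savart kernel `K(x,y) = (x−y)/|x−y|³`. -/
noncomputable def biotSavartKernel (x y : EuclideanSpace ℝ (Fin 3)) :
    EuclideanSpace ℝ (Fin 3) := (‖x - y‖ ^ 3)⁻¹ • (x - y)

open Metric Set Filter Function
open scoped ContDiff Convolution

local notation "ℝ³" => EuclideanSpace ℝ (Fin 3)

/-!
For `x ∈ S` and `y ∈ P` the difference `y - x` lies in an annulus `δ ≤ ‖w‖ ≤ R`, on which the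
kernel `w ↦ K(0, w)` agrees with a smooth compactly supported `g`. Hence on `P` the Biot–Savart
field of `j` is the convolution `j ⋆ g` (with the flipped cross product as pairing), which is
smooth. On a finite measure `‖j‖_{L¹} ≤ C ‖j‖_{L²}`, so `j ↦ j ⋆ g` maps the unit ball of
`L²(μ)` to a uniformly bounded family that is equicontinuous because `g` is uniformly continuous.
By Arzelà–Ascoli its restriction to the compact set `P` is a compact operator into `C(P, ℝ³)`,
and composing with the bounded map `C(P, ℝ³) → L²(P)` keeps it compact.
-/

noncomputable def crossCLM : ℝ³ →L[ℝ] ℝ³ →L[ℝ] ℝ³ :=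
  let e := (WithLp.linearEquiv 2 ℝ (Fin 3 → ℝ)).toLinearMap
  LinearMap.toContinuousLinearMap
    (LinearMap.toContinuousLinearMap.toLinearMap ∘ₗ
      ((crossProduct.compl₁₂ e e).compr₂ (WithLp.linearEquiv 2 ℝ (Fin 3 → ℝ)).symm.toLinearMap))

theorem crossCLM_apply (a b : ℝ³) : crossCLM a b = cross3 a b := rfl

theorem exists_contDiff_hasCompactSupport_eq_of_le_norm_le
    {E F : Type*} [NormedAddCommGroup E] [NormedSpace ℝ E] [FiniteDimensional ℝ E]
    [HasContDiffBump E] [NormedAddCommGroup F] [NormedSpace ℝ F] {n : ℕ∞}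
    {k : E → F} (hk : ContDiffOn ℝ n k {0}ᶜ) {δ : ℝ} (hδ : 0 < δ) (R : ℝ) :
    ∃ g : E → F, ContDiff ℝ n g ∧ HasCompactSupport g ∧
      ∀ w, δ ≤ ‖w‖ → ‖w‖ ≤ R → g w = k w := by
  let outer : ContDiffBump (0 : E) :=
    ⟨max R δ, max R δ + 1, lt_max_of_lt_right hδ, lt_add_one _⟩
  let inner : ContDiffBump (0 : E) := ⟨δ / 2, δ, half_pos hδ, half_lt_self hδ⟩
  -- `φ` is `1` on the annulus and vanishes near `0`, where `k` may be singular.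
  let φ : E → ℝ := fun w => outer w * (1 - inner w)
  have hφ : ContDiff ℝ n φ := outer.contDiff.mul (contDiff_const.sub inner.contDiff)
  have hφ0 : ∀ w ∈ ball (0 : E) (δ / 2), φ w = 0 := fun w hw => by
    simp [φ, inner.one_of_mem_closedBall (ball_subset_closedBall hw)]
  refine ⟨φ • k, ?_, outer.hasCompactSupport.mul_right.smul_right, fun w h1 h2 => ?_⟩
  · refine contDiff_iff_contDiffAt.2 fun w => ?_
    rcases eq_or_ne w 0 with rfl | hw
    · refine (contDiffAt_const (c := (0 : F))).congr_of_eventuallyEq ?_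
      filter_upwards [ball_mem_nhds (0 : E) (half_pos hδ)] with v hv
      simp [hφ0 v hv]
    · exact hφ.contDiffAt.smul (hk.contDiffAt (isOpen_compl_singleton.mem_nhds hw))
  · have h_outer : outer w = 1 :=
      outer.one_of_mem_closedBall (by simpa [outer] using h2.trans (le_max_left R δ))
    have h_inner : inner w = 0 := inner.zero_of_le_dist (by simpa [inner] using h1)
    simp [φ, h_outer, h_inner]

theorem ContinuousLinearMap.norm_integral_apply_apply_le
    {α E E' F : Type*} [MeasurableSpace α] {μ : Measure α}
    [NormedAddCommGroup E] [NormedSpace ℝ E] [NormedAddCommGroup E'] [NormedSpace ℝ E']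
    [NormedAddCommGroup F] [NormedSpace ℝ F]
    (L : E →L[ℝ] E' →L[ℝ] F) {f : α → E} {h : α → E'} (hf : Integrable f μ) {C : ℝ}
    (hh : ∀ t, ‖h t‖ ≤ C) :
    ‖∫ t, L (f t) (h t) ∂μ‖ ≤ ‖L‖ * (∫ t, ‖f t‖ ∂μ) * C :=
  calc ‖∫ t, L (f t) (h t) ∂μ‖ ≤ ∫ t, ‖L‖ * ‖f t‖ * C ∂μ :=
        norm_integral_le_of_norm_le ((hf.norm.const_mul _).mul_const _)
          (ae_of_all _ fun t => L.le_of_opNorm₂_le_of_le le_rfl le_rfl (hh t))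
    _ = ‖L‖ * (∫ t, ‖f t‖ ∂μ) * C := by rw [integral_mul_const, integral_const_mul]

namespace MeasureTheory.Lp

open scoped ENNReal

variable {α E : Type*} [MeasurableSpace α] {μ : Measure α} [IsFiniteMeasure μ]
  [NormedAddCommGroup E] {p : ℝ≥0∞} [Fact (1 ≤ p)]

theorem integrable (j : Lp E p μ) : Integrable j μ :=
  (Lp.memLp j).integrable Fact.out

theorem integral_norm_le (j : Lp E p μ) :
    ∫ t, ‖j t‖ ∂μ ≤ (μ univ).toReal ^ (1 - p.toReal⁻¹) * ‖j‖ := by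
  have hj := Lp.aestronglyMeasurable j
  have hp : (1 : ℝ≥0∞) ≤ p := Fact.out
  have hexp : 0 ≤ 1 - p.toReal⁻¹ := by
    rcases eq_or_ne p ⊤ with rfl | hp_top
    · simp
    · simpa using inv_le_one_of_one_le₀ (by simpa using ENNReal.toReal_mono hp_top hp)
  have h := eLpNorm_le_eLpNorm_mul_rpow_measure_univ hp hj
  simp only [ENNReal.toReal_one, div_one, one_div] at h
  rw [integral_norm_eq_lintegral_enorm hj, ← eLpNorm_one_eq_lintegral_enorm]
  refine (ENNReal.toReal_mono ?_ h).trans_eq ?_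
  · exact ENNReal.mul_ne_top (Lp.eLpNorm_ne_top j)
      (ENNReal.rpow_ne_top_of_nonneg hexp (measure_ne_top μ _))
  · rw [ENNReal.toReal_mul, ENNReal.toReal_rpow, Lp.norm_def, mul_comm]

end MeasureTheory.Lp

open BoundedContinuousFunction in
theorem isCompactOperator_of_equicontinuous_image_ball {X α F : Type*} [NormedAddCommGroup X]
    [NormedSpace ℝ X] [TopologicalSpace α] [CompactSpace α] [NormedAddCommGroup F]
    [NormedSpace ℝ F] [ProperSpace F] (T : X →L[ℝ] (α →ᵇ F))
    (hT : Equicontinuous fun j : ball (0 : X) 1 => ⇑(T j)) : IsCompactOperator T := by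
  refine (isCompactOperator_iff_isCompact_closure_image_ball (T : X →ₗ[ℝ] α →ᵇ F) one_pos).2 ?_
  rw [ContinuousLinearMap.coe_coe]
  refine arzela_ascoli (closedBall 0 ‖T‖) (isCompact_closedBall 0 _) _ ?_ ?_
  · rintro _ y ⟨j, hj, rfl⟩
    rw [mem_closedBall_zero_iff]
    calc ‖T j y‖ ≤ ‖T j‖ := norm_coe_le_norm _ _
      _ ≤ ‖T‖ * ‖j‖ := T.le_opNorm j
      _ ≤ ‖T‖ * 1 := by gcongr; exact (mem_ball_zero_iff.1 hj).le
      _ = ‖T‖ := mul_one _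
  · convert hT.comp fun f : T '' ball 0 1 => (⟨f.2.choose, f.2.choose_spec.1⟩ : ball (0 : X) 1)
      using 1
    exact funext fun f => congrArg DFunLike.coe f.2.choose_spec.2.symm

section ExtendByZero

open BoundedContinuousFunction
open scoped ENNReal

variable {G F : Type*} [TopologicalSpace G] [NormedAddCommGroup F] {s : Set G}

theorem BoundedContinuousFunction.norm_extend_zero_le (h : s →ᵇ F) (y : G) :
    ‖Function.extend Subtype.val h 0 y‖ ≤ ‖h‖ := by
  by_cases hy : y ∈ s
  · rw [show y = ((⟨y, hy⟩ : s) : G) from rfl, Subtype.val_injective.extend_apply]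
    exact h.norm_coe_le_norm _
  · rw [Function.extend_apply' _ _ _ (by simpa using hy)]
    simp

variable [MeasurableSpace G] [OpensMeasurableSpace G] [SecondCountableTopologyEither G F]

theorem BoundedContinuousFunction.memLp_extend_zero (hs : MeasurableSet s) (h : s →ᵇ F)
    (q : ℝ≥0∞) (ν : Measure G) [IsFiniteMeasure ν] :
    MemLp (Function.extend Subtype.val h 0) q ν := by
  refine MemLp.of_bound ?_ ‖h‖ (ae_of_all _ h.norm_extend_zero_le)
  have hsupp : s.indicator (Function.extend Subtype.val h 0) = Function.extend Subtype.val h 0 :=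
    indicator_eq_self.2 fun y hy => by
      by_contra hys
      exact hy (Function.extend_apply' _ _ _ (by simpa using hys))
  have hcont : ContinuousOn (Function.extend Subtype.val h 0) s := by
    rw [continuousOn_iff_continuous_domRestrict]
    convert h.continuous
    exact funext fun y => Subtype.val_injective.extend_apply _ _ y
  rw [← hsupp, aestronglyMeasurable_indicator_iff hs]
  exact hcont.aestronglyMeasurable hs

variable [NormedSpace ℝ F]

noncomputable def BoundedContinuousFunction.extendByZeroLp (hs : MeasurableSet s) (q : ℝ≥0∞)
    [Fact (1 ≤ q)] (ν : Measure G) [IsFiniteMeasure ν] : (s →ᵇ F) →L[ℝ] Lp F q ν :=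
  LinearMap.mkContinuous
    { toFun := fun h => (memLp_extend_zero hs h q ν).toLp _
      map_add' := fun h h' => by
        rw [← MemLp.toLp_add]
        refine MemLp.toLp_congr _ _ (ae_of_all _ fun y => ?_)
        simpa using congrFun (Function.extend_add Subtype.val h h' (0 : G → F) 0) y
      map_smul' := fun c h => by
        rw [RingHom.id_apply, ← MemLp.toLp_const_smul]
        refine MemLp.toLp_congr _ _ (ae_of_all _ fun y => ?_)
        change Function.extend Subtype.val (c • ⇑h) 0 y = _
        simpa only [smul_zero] using
          congrFun (Function.extend_smul c Subtype.val h (0 : G → F)) y }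
    (measureUnivNNReal ν ^ q.toReal⁻¹) fun h => by
      refine Lp.norm_le_of_ae_bound (norm_nonneg _) ?_
      filter_upwards [MemLp.coeFn_toLp (memLp_extend_zero hs h q ν)] with y hy
      exact (congrArg norm hy).le.trans (h.norm_extend_zero_le y)

theorem BoundedContinuousFunction.coeFn_extendByZeroLp (hs : MeasurableSet s) (q : ℝ≥0∞)
    [Fact (1 ≤ q)] (ν : Measure G) [IsFiniteMeasure ν] (h : s →ᵇ F) :
    extendByZeroLp hs q ν h =ᵐ[ν] Function.extend Subtype.val h 0 :=
  MemLp.coeFn_toLp (memLp_extend_zero hs h q ν)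

end ExtendByZero

section BoundedConvolution

open BoundedContinuousFunction
open scoped ENNReal

variable {G E E' F : Type*} [NormedAddCommGroup G] [MeasurableSpace G]
  [NormedAddCommGroup E] [NormedSpace ℝ E] [NormedAddCommGroup E'] [NormedSpace ℝ E']
  [NormedAddCommGroup F] [NormedSpace ℝ F] {μ : Measure G} (L : E →L[ℝ] E' →L[ℝ] F)

theorem convolution_congr_left {g : G → E'} {f f' : G → E} (h : f =ᵐ[μ] f') :
    f ⋆[L, μ] g = f' ⋆[L, μ] g := by
  ext y
  simp only [convolution_def]
  exact integral_congr_ae (h.mono fun t ht => by simp only [ht])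

variable (g : G →ᵇ E') {f : G → E}

theorem norm_convolution_le_of_bounded (hf : Integrable f μ) (y : G) :
    ‖(f ⋆[L, μ] g) y‖ ≤ ‖L‖ * (∫ t, ‖f t‖ ∂μ) * ‖g‖ :=
  L.norm_integral_apply_apply_le hf fun _ => g.norm_coe_le_norm _

variable [BorelSpace G] [SecondCountableTopologyEither G E']

theorem convolutionExists_of_integrable_of_bounded (hf : Integrable f μ) :
    ConvolutionExists f g L μ := fun _ =>
  ((hf.norm.const_mul ‖L‖).mul_const ‖g‖).mono'
    (hf.aestronglyMeasurable.convolution_integrand_snd' L g.continuous.aestronglyMeasurable)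
    (ae_of_all _ fun _ => L.le_of_opNorm₂_le_of_le le_rfl le_rfl (g.norm_coe_le_norm _))

theorem norm_convolution_sub_convolution_le (hf : Integrable f μ) {y y' : G} {η : ℝ}
    (hη : ∀ t, ‖g (y - t) - g (y' - t)‖ ≤ η) :
    ‖(f ⋆[L, μ] g) y - (f ⋆[L, μ] g) y'‖ ≤ ‖L‖ * (∫ t, ‖f t‖ ∂μ) * η := by
  have hfg := convolutionExists_of_integrable_of_bounded L g hf
  rw [convolution_def, convolution_def, ← integral_sub (hfg y) (hfg y')]
  simp_rw [← map_sub]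
  exact L.norm_integral_apply_apply_le hf hη

variable [IsFiniteMeasure μ] {p : ℝ≥0∞} [Fact (1 ≤ p)]

noncomputable def convolutionBCF : Lp E p μ →L[ℝ] (G →ᵇ F) :=
  LinearMap.mkContinuous
    { toFun := fun j => ofNormedAddCommGroup (⇑j ⋆[L, μ] ⇑g)
        (BddAbove.continuous_convolution_right_of_integrable L
          ⟨‖g‖, forall_mem_range.2 g.norm_coe_le_norm⟩ (Lp.integrable j) g.continuous)
        (‖L‖ * (∫ t, ‖j t‖ ∂μ) * ‖g‖)
        (norm_convolution_le_of_bounded L g (Lp.integrable j))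
      map_add' := fun j j' => by
        ext y
        simp only [coe_add, Pi.add_apply, coe_ofNormedAddCommGroup]
        rw [convolution_congr_left L (Lp.coeFn_add j j'), ConvolutionExists.add_distrib
          (convolutionExists_of_integrable_of_bounded L g (Lp.integrable j))
          (convolutionExists_of_integrable_of_bounded L g (Lp.integrable j')), Pi.add_apply]
      map_smul' := fun c j => by
        ext y
        simp only [coe_smul, coe_ofNormedAddCommGroup, RingHom.id_apply]
        rw [convolution_congr_left L (Lp.coeFn_smul c j), smul_convolution]
        rfl }
    (‖L‖ * (μ univ).toReal ^ (1 - p.toReal⁻¹) * ‖g‖) fun j => by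
      refine (norm_le (by positivity)).2 fun y => ?_
      calc ‖(⇑j ⋆[L, μ] ⇑g) y‖ ≤ ‖L‖ * (∫ t, ‖j t‖ ∂μ) * ‖g‖ :=
            norm_convolution_le_of_bounded L g (Lp.integrable j) y
        _ ≤ ‖L‖ * ((μ univ).toReal ^ (1 - p.toReal⁻¹) * ‖j‖) * ‖g‖ := by
            gcongr; exact Lp.integral_norm_le j
        _ = _ := by ring

theorem uniformEquicontinuous_convolutionBCF_ball (hg : UniformContinuous g) :
    UniformEquicontinuous fun j : ball (0 : Lp E p μ) 1 =>
      ⇑(convolutionBCF L g (j : Lp E p μ)) := by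
  set c := ‖L‖ * (μ univ).toReal ^ (1 - p.toReal⁻¹)
  rw [Metric.uniformEquicontinuous_iff]
  intro ε hε
  obtain ⟨d, hd, hgd⟩ := Metric.uniformContinuous_iff.1 hg (ε / (c + 1)) (by positivity)
  refine ⟨d, hd, fun y y' hyy' j => ?_⟩
  have hj : ‖L‖ * ∫ t, ‖(j : Lp E p μ) t‖ ∂μ ≤ c :=
    calc ‖L‖ * ∫ t, ‖(j : Lp E p μ) t‖ ∂μ
        ≤ ‖L‖ * ((μ univ).toReal ^ (1 - p.toReal⁻¹) * ‖(j : Lp E p μ)‖) := by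
          gcongr; exact Lp.integral_norm_le _
      _ ≤ ‖L‖ * ((μ univ).toReal ^ (1 - p.toReal⁻¹) * 1) := by
          gcongr; exact (mem_ball_zero_iff.1 j.2).le
      _ = c := by rw [mul_one]
  rw [dist_eq_norm]
  calc ‖convolutionBCF L g (j : Lp E p μ) y - convolutionBCF L g (j : Lp E p μ) y'‖
      ≤ ‖L‖ * (∫ t, ‖(j : Lp E p μ) t‖ ∂μ) * (ε / (c + 1)) :=
        norm_convolution_sub_convolution_le L g (Lp.integrable _) fun t => by
          rw [← dist_eq_norm]
          exact (hgd (by rwa [dist_sub_right])).le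
    _ ≤ c * (ε / (c + 1)) := by gcongr
    _ = ε * (c / (c + 1)) := by ring
    _ < ε * 1 := by gcongr; exact (div_lt_one (by positivity)).2 (lt_add_one c)
    _ = ε := mul_one ε

theorem isCompactOperator_restrict_convolutionBCF [ProperSpace F] (hg : UniformContinuous g)
    {s : Set G} (hs : IsCompact s) :
    IsCompactOperator ((compContinuousCLM F ℝ ((ContinuousMap.id G).restrict s)).comp
      (convolutionBCF L g : Lp E p μ →L[ℝ] (G →ᵇ F))) := by
  have := isCompact_iff_compactSpace.1 hs
  refine isCompactOperator_of_equicontinuous_image_ball _ ?_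
  exact (equicontinuous_restrict_iff _).2
    ((uniformEquicontinuous_convolutionBCF_ball L g hg).uniformEquicontinuousOn s).equicontinuousOn

theorem exists_isCompactOperator_ae_eq_convolution [ProperSpace F]
    [SecondCountableTopologyEither G F] (hg : UniformContinuous g) {P : Set G} (hP : IsCompact P)
    (q : ℝ≥0∞) [Fact (1 ≤ q)] (ν : Measure G) [IsFiniteMeasureOnCompacts ν] :
    ∃ T : Lp E p μ →L[ℝ] Lp F q (ν.restrict P), IsCompactOperator T ∧
      ∀ j, ∀ᵐ y ∂ν.restrict P, T j y = (⇑j ⋆[L, μ] ⇑g) y := by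
  have : IsFiniteMeasure (ν.restrict P) := isFiniteMeasure_restrict.2 hP.measure_lt_top.ne
  let A := (compContinuousCLM F ℝ ((ContinuousMap.id G).restrict P)).comp
    (convolutionBCF L g : Lp E p μ →L[ℝ] (G →ᵇ F))
  let B := extendByZeroLp (F := F) hP.measurableSet q (ν.restrict P)
  refine ⟨B.comp A, (isCompactOperator_restrict_convolutionBCF L g hg hP).clm_comp B,
    fun j => ?_⟩
  filter_upwards [coeFn_extendByZeroLp hP.measurableSet q _ (A j),
    ae_restrict_mem hP.measurableSet] with y hy hyP
  rw [ContinuousLinearMap.comp_apply, hy, show y = ((⟨y, hyP⟩ : P) : G) from rfl,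
    Subtype.val_injective.extend_apply]
  rfl

end BoundedConvolution

theorem biotSavartKernel_eq_biotSavartKernel_zero (x y : ℝ³) :
    biotSavartKernel x y = biotSavartKernel 0 (y - x) := by
  simp [biotSavartKernel]

theorem contDiffOn_biotSavartKernel_zero : ContDiffOn ℝ ∞ (biotSavartKernel 0) {0}ᶜ := by
  intro w hw
  have hw : w ≠ 0 := hw
  refine ContDiffAt.contDiffWithinAt ?_
  change ContDiffAt ℝ ∞ (fun v => (‖0 - v‖ ^ 3)⁻¹ • (0 - v)) w
  simp only [zero_sub, norm_neg]
  exact (((contDiffAt_norm ℝ hw).pow 3).inv (by positivity)).smul contDiffAt_id.neg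

theorem integral_cross_biotSavartKernel_eq_convolution {S : Set ℝ³} {μ : Measure ℝ³}
    (hμ : μ Sᶜ = 0) {δ R : ℝ} {g : ℝ³ → ℝ³}
    (hg : ∀ w, δ ≤ ‖w‖ → ‖w‖ ≤ R → g w = biotSavartKernel 0 w) (j : ℝ³ → ℝ³) {y : ℝ³}
    (hy : ∀ x ∈ S, δ ≤ dist x y ∧ dist x y ≤ R) :
    ∫ x, cross3 (biotSavartKernel x y) (j x) ∂μ = (j ⋆[crossCLM.flip, μ] g) y := by
  rw [convolution_def]
  refine integral_congr_ae ?_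
  filter_upwards [mem_ae_iff.2 hμ] with x hx
  rw [ContinuousLinearMap.flip_apply, crossCLM_apply, biotSavartKernel_eq_biotSavartKernel_zero,
    hg _ (by rw [← dist_eq_norm, dist_comm]; exact (hy x hx).1)
      (by rw [← dist_eq_norm, dist_comm]; exact (hy x hx).2)]

open BoundedContinuousFunction in
/-- Let `P ⊂ ℝ³` be compact and `S ⊂ ℝ³` compact with `dist(S,P) ≥ δ > 0`, `μ` a finite
measure carried by `S`, and `j ∈ L²(S,ℝ³;μ)`. Then `y ↦ ∫_S K(x,y) × j(x) dμ(x)` is `C^k`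
on the interior of `P` for each `k`, and `j ↦ BS(j)` defines a bounded linear operator from
`L²(S,ℝ³;μ)` to `L²(P,ℝ³)` which is moreover compact. -/
theorem biot_savart_smooth_and_compact
    (S P : Set (EuclideanSpace ℝ (Fin 3))) (hS : IsCompact S) (hP : IsCompact P)
    (δ : ℝ) (hδ : 0 < δ) (hdist : ∀ x ∈ S, ∀ y ∈ P, δ ≤ dist x y)
    (μ : Measure (EuclideanSpace ℝ (Fin 3))) [IsFiniteMeasure μ] (hμ : μ Sᶜ = 0) :
    (∀ j : EuclideanSpace ℝ (Fin 3) → EuclideanSpace ℝ (Fin 3), MemLp j 2 μ →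
      ∀ k : ℕ, ContDiffOn ℝ k
        (fun y => ∫ x, cross3 (biotSavartKernel x y) (j x) ∂μ) (interior P))
    ∧ ∃ T : Lp (EuclideanSpace ℝ (Fin 3)) 2 μ
          →L[ℝ] Lp (EuclideanSpace ℝ (Fin 3)) 2 (volume.restrict P),
        IsCompactOperator T ∧
        ∀ j : Lp (EuclideanSpace ℝ (Fin 3)) 2 μ,
          ∀ᵐ y ∂(volume.restrict P),
            T j y = ∫ x, cross3 (biotSavartKernel x y) (j x) ∂μ := by
  obtain ⟨R, hR⟩ := isBounded_iff.1 (hS.union hP).isBounded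
  obtain ⟨g, hg, hgs, hgK⟩ := exists_contDiff_hasCompactSupport_eq_of_le_norm_le (n := ⊤)
    contDiffOn_biotSavartKernel_zero hδ R
  have hBS : ∀ j, ∀ y ∈ P, ∫ x, cross3 (biotSavartKernel x y) (j x) ∂μ =
      (j ⋆[crossCLM.flip, μ] g) y := fun j y hy =>
    integral_cross_biotSavartKernel_eq_convolution hμ hgK j fun x hx =>
      ⟨hdist x hx y hy, hR (Or.inl hx) (Or.inr hy)⟩
  refine ⟨fun j hj k => ?_, ?_⟩
  · refine ContDiff.contDiffOn ?_ |>.congr fun y hy => hBS j y (interior_subset hy)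
    exact hgs.contDiff_convolution_right _ (hj.integrable one_le_two).locallyIntegrable
      (hg.of_le (by exact_mod_cast le_top))
  · obtain ⟨C, hC⟩ := hg.continuous.bounded_above_of_compact_support hgs
    obtain ⟨T, hT, hTj⟩ := exists_isCompactOperator_ae_eq_convolution (μ := μ) (p := 2)
      crossCLM.flip (ofNormedAddCommGroup g hg.continuous C hC)
      (hg.continuous.uniformContinuous_of_tendsto_cocompact hgs.is_zero_at_infty) hP 2 volume
    refine ⟨T, hT, fun j => ?_⟩
    filter_upwards [hTj j, ae_restrict_mem hP.measurableSet] with y hy hyP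
    exact hy.trans (hBS j y hyP).symm
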